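/- Let t₁, t₂, s₁, s₂ ∈ ℂ with Re(s₁ + t₁) > 0, Re(s₁ + t₂) > 0, and Re(s₂ + t₁ + t₂) > 0. Then the triple integral ∫_{ℝˣ}∫_{ℝˣ}∫_{ℝˣ} |a₁|^{s₁+t₁} · |a₂|^{s₂−s₁+t₁} · |c|^{t₂−t₁} · exp(−π a₂² − π c²/a₂² − π a₁²/c²) d×c d×a₁ d×a₂ converges absolutely and equals ζ_ℝ(s₁ + t₁) · ζ_ℝ(s₁ + t₂) · ζ_ℝ(s₂ + t₁ + t₂). (This is the base case n = 2, F = ℝ of the paper's theorem that the Bump–Friedberg integral of the spherical Whittaker function equals L(s₁, π)·L(s₂, π, ∧²), made fully explicit for π = |·|^{t₁} ⊞ |·|^{t₂} via the paper's propagation formula.) -/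

import Mathlib

open MeasureTheory

/-- The real zeta factor `ζ_ℝ(s) = π^{-s/2} Γ(s/2)`. -/
noncomputable def zetaR (s : ℂ) : ℂ :=
  (Real.pi : ℂ) ^ (-s / 2) * Complex.Gamma (s / 2)

/-- The complex zeta factor `ζ_ℂ(s) = 2 (2π)^{-s} Γ(s)`. -/
noncomputable def zetaC (s : ℂ) : ℂ :=
  2 * (2 * (Real.pi : ℂ)) ^ (-s) * Complex.Gamma s

/-- The multiplicative Haar measure `d×x = dx/|x|` on `ℝˣ = ℝ ∖ {0}`. -/
noncomputable def mulHaarR : Measure ℝ :=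
  volume.withDensity fun x => ENNReal.ofReal (1 / |x|)

/-- The multiplicative Haar measure `d×z = (2/π) dA(z)/|z|²` on `ℂˣ`. -/
noncomputable def mulHaarC : Measure ℂ :=
  volume.withDensity fun z => ENNReal.ofReal (2 / (Real.pi * ‖z‖ ^ 2))

/-- The complex power `|x|^w = exp(w log |x|)` for `x ∈ ℝ`. -/
noncomputable def cpowR (x : ℝ) (w : ℂ) : ℂ :=
  Complex.exp (w * (Real.log |x| : ℂ))

/-- The complex power `|z|_ℂ^w = exp(w log |z|²)` for `z ∈ ℂ`. -/
noncomputable def cpowC (z : ℂ) (w : ℂ) : ℂ :=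
  Complex.exp (w * (Real.log (‖z‖ ^ 2) : ℂ))

/-- The integrand of the `n = 2`, `F = ℝ` Bump–Friedberg integral, in the variables
`p = (a₁, a₂, c)`:
`|a₁|^{s₁+t₁} |a₂|^{s₂-s₁+t₁} |c|^{t₂-t₁} exp(-π a₂² - π c²/a₂² - π a₁²/c²)`. -/
noncomputable def bfIntegrandR2 (s₁ s₂ t₁ t₂ : ℂ) (p : ℝ × ℝ × ℝ) : ℂ :=
  cpowR p.1 (s₁ + t₁) * cpowR p.2.1 (s₂ - s₁ + t₁) * cpowR p.2.2 (t₂ - t₁) *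
    (Real.exp (-Real.pi * p.2.1 ^ 2 - Real.pi * (p.2.2 ^ 2 / p.2.1 ^ 2)
      - Real.pi * (p.1 ^ 2 / p.2.2 ^ 2)) : ℂ)

/-! The substitution `(a₁, a₂, c) ↦ (a₁ / c, a₂, c / a₂)` preserves the multiplicative Haar
measure on `(ℝˣ)³` and turns the integrand into `φ_{s₁+t₁}(x) φ_{s₂+t₁+t₂}(y) φ_{s₁+t₂}(z)`, where
`φ_s(x) = |x|^s e^{-π x²}`. By Fubini the integral is then a product of three Tate integrals
`∫ φ_s d×x`, and each of these is twice the Mellin transform of `e^{-π t²}`, i.e. `Γ_ℝ(s)`. -/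

open Set

lemma hasMellin_exp_neg_mul {r : ℝ} (hr : 0 < r) {s : ℂ} (hs : 0 < s.re) :
    HasMellin (fun t : ℝ => (Real.exp (-(r * t)) : ℂ)) s ((r : ℂ) ^ (-s) * Complex.Gamma s) := by
  have hconv : MellinConvergent (fun t : ℝ => (Real.exp (-t) : ℂ)) s := by
    simpa only [MellinConvergent, smul_eq_mul, mul_comm] using Complex.GammaIntegral_convergent hs
  refine ⟨(MellinConvergent.comp_mul_left hr).mpr hconv, ?_⟩
  rw [mellin_comp_mul_left (fun t : ℝ => (Real.exp (-t) : ℂ)) s hr,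
    ← Complex.GammaIntegral_eq_mellin, ← Complex.Gamma_eq_integral hs, smul_eq_mul]

lemma hasMellin_exp_neg_pi_mul_sq {s : ℂ} (hs : 0 < s.re) :
    HasMellin (fun t : ℝ => (Real.exp (-Real.pi * t ^ 2) : ℂ)) s (Complex.Gammaℝ s / 2) := by
  obtain ⟨hconv, hval⟩ := hasMellin_exp_neg_mul Real.pi_pos (s := s / 2) (by simpa using hs)
  set f : ℝ → ℂ := fun t => Real.exp (-(Real.pi * t))
  have hf : (fun t : ℝ => (Real.exp (-Real.pi * t ^ 2) : ℂ)) = fun t => f (t ^ (2 : ℝ)) := by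
    ext t; simp only [f, Real.rpow_two, neg_mul]
  rw [hf]
  refine ⟨(MellinConvergent.comp_rpow two_ne_zero).mpr (by simpa using hconv), ?_⟩
  rw [mellin_comp_rpow, Complex.ofReal_ofNat, hval, Complex.Gammaℝ_def, neg_div]
  norm_num
  ring

lemma cpowR_abs (x : ℝ) (w : ℂ) : cpowR |x| w = cpowR x w := by
  rw [cpowR, cpowR, abs_abs]

lemma cpowR_of_pos {t : ℝ} (ht : 0 < t) (w : ℂ) : cpowR t w = (t : ℂ) ^ w := by
  rw [cpowR, abs_of_pos ht, Complex.cpow_def_of_ne_zero (Complex.ofReal_ne_zero.mpr ht.ne'),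
    ← Complex.ofReal_log ht.le, mul_comm]

lemma inv_smul_cpowR_smul {E : Type*} [NormedAddCommGroup E] [NormedSpace ℂ E] {t : ℝ}
    (ht : 0 < t) (w : ℂ) (v : E) : t⁻¹ • cpowR t w • v = (t : ℂ) ^ (w - 1) • v := by
  have ht' : (t : ℂ) ≠ 0 := Complex.ofReal_ne_zero.mpr ht.ne'
  rw [cpowR_of_pos ht, Complex.cpow_sub _ _ ht', Complex.cpow_one, ← Complex.coe_smul, smul_smul,
    Complex.ofReal_inv, div_eq_inv_mul]

section Abs

variable {E : Type*} [NormedAddCommGroup E]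

lemma integrableOn_Ioi_comp_abs_iff {f : ℝ → E} :
    IntegrableOn (fun x => f |x|) (Ioi 0) ↔ IntegrableOn f (Ioi 0) :=
  integrableOn_congr_fun (fun x hx => by rw [abs_of_pos hx]) measurableSet_Ioi

lemma integrableOn_Iic_comp_abs_iff {f : ℝ → E} :
    IntegrableOn (fun x => f |x|) (Iic 0) ↔ IntegrableOn f (Ioi 0) := by
  have hneg : MeasurableEmbedding fun x : ℝ => -x := (Homeomorph.neg ℝ).measurableEmbedding
  rw [← integrableOn_Ioi_comp_abs_iff, ← integrableOn_Ici_iff_integrableOn_Ioi]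
  conv_lhs => rw [← Measure.map_neg_eq_self (volume : Measure ℝ)]
  rw [hneg.integrableOn_map_iff]
  simp [Function.comp_def]

lemma integrable_comp_abs_iff {f : ℝ → E} :
    Integrable (fun x => f |x|) ↔ IntegrableOn f (Ioi 0) := by
  rw [← integrableOn_univ, ← Iic_union_Ioi (a := (0 : ℝ)), integrableOn_union,
    integrableOn_Iic_comp_abs_iff, integrableOn_Ioi_comp_abs_iff, and_self]

lemma integral_comp_abs_eq_two_smul [NormedSpace ℝ E] {f : ℝ → E} (hf : IntegrableOn f (Ioi 0)) :
    ∫ x, f |x| = (2 : ℝ) • ∫ x in Ioi 0, f x := by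
  have hIoi : ∫ x in Ioi 0, f |x| = ∫ x in Ioi 0, f x :=
    setIntegral_congr_fun measurableSet_Ioi fun x hx => by rw [abs_of_pos hx]
  have hIic : ∫ x in Iic 0, f |x| = ∫ x in Ioi 0, f x := by
    rw [← hIoi, ← neg_zero, ← integral_comp_neg_Iic]
    simp
  calc ∫ x, f |x| = (∫ x in Iic 0, f |x|) + ∫ x in Ioi 0, f |x| := by
        rw [← setIntegral_union (Iic_disjoint_Ioi le_rfl) measurableSet_Ioi
          (integrableOn_Iic_comp_abs_iff.mpr hf) (integrableOn_Ioi_comp_abs_iff.mpr hf),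
          Iic_union_Ioi, Measure.restrict_univ]
    _ = (2 : ℝ) • ∫ x in Ioi 0, f x := by rw [hIic, hIoi, two_smul]

end Abs

section MulHaarR

variable {E : Type*} [NormedAddCommGroup E]

instance : SigmaFinite mulHaarR := SigmaFinite.withDensity_ofReal _

instance : NullSingletonClass mulHaarR :=
  ⟨fun x => withDensity_absolutelyContinuous _ _ (measure_singleton x)⟩

lemma integrable_mulHaarR_iff [NormedSpace ℝ E] {g : ℝ → E} :
    Integrable g mulHaarR ↔ Integrable fun x => |x|⁻¹ • g x := by
  rw [mulHaarR, integrable_withDensity_iff_integrable_smul' (by fun_prop)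
    (.of_forall fun _ => ENNReal.ofReal_lt_top)]
  simp [ENNReal.toReal_ofReal, abs_nonneg]

lemma integral_mulHaarR [NormedSpace ℝ E] (g : ℝ → E) :
    ∫ x, g x ∂mulHaarR = ∫ x, |x|⁻¹ • g x := by
  rw [mulHaarR, integral_withDensity_eq_integral_toReal_smul (by fun_prop)
    (.of_forall fun _ => ENNReal.ofReal_lt_top)]
  simp [ENNReal.toReal_ofReal, abs_nonneg]

variable [NormedSpace ℂ E] {f : ℝ → E} {s : ℂ}

lemma abs_inv_smul_cpowR_smul_comp_abs :
    (fun x : ℝ => |x|⁻¹ • cpowR x s • f |x|) = fun x => (fun t => t⁻¹ • cpowR t s • f t) |x| := by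
  simp only [cpowR_abs]

lemma integrable_mulHaarR_cpowR_smul_comp_abs_iff :
    Integrable (fun x => cpowR x s • f |x|) mulHaarR ↔ MellinConvergent f s := by
  rw [integrable_mulHaarR_iff, abs_inv_smul_cpowR_smul_comp_abs,
    integrable_comp_abs_iff (f := fun t => t⁻¹ • cpowR t s • f t), MellinConvergent]
  exact integrableOn_congr_fun (fun t ht => inv_smul_cpowR_smul ht s (f t)) measurableSet_Ioi

lemma integral_mulHaarR_cpowR_smul_comp_abs (hf : MellinConvergent f s) :
    ∫ x, cpowR x s • f |x| ∂mulHaarR = (2 : ℝ) • mellin f s := by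
  have hf' : IntegrableOn (fun t => t⁻¹ • cpowR t s • f t) (Ioi 0) :=
    (integrableOn_congr_fun (fun t ht => inv_smul_cpowR_smul ht s (f t)) measurableSet_Ioi).mpr hf
  rw [integral_mulHaarR, abs_inv_smul_cpowR_smul_comp_abs, integral_comp_abs_eq_two_smul hf',
    mellin]
  congr 1
  exact setIntegral_congr_fun measurableSet_Ioi fun t ht => inv_smul_cpowR_smul ht s (f t)

end MulHaarR

section Gaussian

/-- Integrand of Tate's local zeta integral at the real place, for the standard Gaussian. -/
noncomputable def tateGaussian (s : ℂ) (x : ℝ) : ℂ :=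
  cpowR x s * Real.exp (-Real.pi * x ^ 2)

variable {s : ℂ}

lemma tateGaussian_eq_cpowR_smul_comp_abs (s : ℂ) :
    tateGaussian s = fun x => cpowR x s • (fun t : ℝ => (Real.exp (-Real.pi * t ^ 2) : ℂ)) |x| := by
  ext x
  simp only [tateGaussian, sq_abs, smul_eq_mul]

lemma integrable_tateGaussian (hs : 0 < s.re) : Integrable (tateGaussian s) mulHaarR := by
  rw [tateGaussian_eq_cpowR_smul_comp_abs, integrable_mulHaarR_cpowR_smul_comp_abs_iff
    (f := fun t : ℝ => (Real.exp (-Real.pi * t ^ 2) : ℂ))]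
  exact (hasMellin_exp_neg_pi_mul_sq hs).1

lemma integral_tateGaussian (hs : 0 < s.re) :
    ∫ x, tateGaussian s x ∂mulHaarR = Complex.Gammaℝ s := by
  obtain ⟨hconv, hval⟩ := hasMellin_exp_neg_pi_mul_sq hs
  rw [tateGaussian_eq_cpowR_smul_comp_abs, integral_mulHaarR_cpowR_smul_comp_abs hconv, hval,
    Complex.real_smul]
  push_cast
  ring

end Gaussian

lemma MeasurableEquiv.map_withDensity {α β : Type*} [MeasurableSpace α] [MeasurableSpace β]
    (e : α ≃ᵐ β) (μ : Measure α) (d : α → ENNReal) :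
    Measure.map e (μ.withDensity d) = (Measure.map e μ).withDensity (d ∘ e.symm) := by
  ext S hS
  rw [e.map_apply, withDensity_apply _ (e.measurable hS), withDensity_apply _ hS, e.restrict_map,
    lintegral_map_equiv]
  simp

lemma measurePreserving_mulHaarR_mul_left {a : ℝ} (ha : a ≠ 0) :
    MeasurePreserving (a * ·) mulHaarR mulHaarR := by
  refine ⟨measurable_const_mul a, ?_⟩
  have hmap : Measure.map (MeasurableEquiv.mulLeft₀ a ha) volume = ENNReal.ofReal |a⁻¹| • volume :=
    Real.map_volume_mul_left ha
  have hdens : (fun x : ℝ => ENNReal.ofReal (1 / |x|)) ∘ (MeasurableEquiv.mulLeft₀ a ha).symm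
      = ENNReal.ofReal |a| • fun y => ENNReal.ofReal (1 / |y|) := by
    ext y
    simp [mul_comm]
  change Measure.map (MeasurableEquiv.mulLeft₀ a ha) mulHaarR = mulHaarR
  rw [mulHaarR, MeasurableEquiv.map_withDensity, hmap, withDensity_smul_measure, hdens,
    withDensity_smul' _ _ ENNReal.ofReal_ne_top, smul_smul, ← ENNReal.ofReal_mul (abs_nonneg _),
    abs_inv, inv_mul_cancel₀ (abs_ne_zero.2 ha), ENNReal.ofReal_one, one_smul]

lemma measurePreserving_prod_mulHaarR_inv_mul {α : Type*} [MeasurableSpace α] {μ : Measure α}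
    [SFinite μ] {u : α → ℝ} (hu : Measurable u) (hu0 : ∀ᵐ a ∂μ, u a ≠ 0) :
    MeasurePreserving (fun p : α × ℝ => (p.1, (u p.1)⁻¹ * p.2))
      (μ.prod mulHaarR) (μ.prod mulHaarR) :=
  (MeasurePreserving.id μ).skew_product (by fun_prop)
    (hu0.mono fun _ ha => (measurePreserving_mulHaarR_mul_left (inv_ne_zero ha)).map_eq)

lemma MeasureTheory.MeasurePreserving.integral_comp_of_aestronglyMeasurable {α β G : Type*}
    [MeasurableSpace α] [MeasurableSpace β] [NormedAddCommGroup G] [NormedSpace ℝ G]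
    {μ : Measure α} {ν : Measure β} {f : α → β} (hf : MeasurePreserving f μ ν) {g : β → G}
    (hg : AEStronglyMeasurable g ν) : ∫ x, g (f x) ∂μ = ∫ y, g y ∂ν := by
  rw [← hf.map_eq] at hg ⊢
  exact (integral_map hf.measurable.aemeasurable hg).symm

section BumpFriedberg

local notation "μ₃" => mulHaarR.prod (mulHaarR.prod mulHaarR)

/-- The substitution `(a₁, a₂, c) ↦ (a₁ / c, a₂, c / a₂)`. -/
noncomputable def bfSubstR2 (p : ℝ × ℝ × ℝ) : ℝ × ℝ × ℝ :=
  (p.2.2⁻¹ * p.1, p.2.1, p.2.1⁻¹ * p.2.2)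

lemma measurePreserving_bfSubstR2 : MeasurePreserving bfSubstR2 μ₃ μ₃ := by
  -- `a₁ ↦ a₁ / c` fibrewise over `(a₂, c)`, then `c ↦ c / a₂` fibrewise over `a₂`
  have hc : MeasurePreserving (fun p : (ℝ × ℝ) × ℝ => (p.1, p.1.2⁻¹ * p.2))
      ((mulHaarR.prod mulHaarR).prod mulHaarR) ((mulHaarR.prod mulHaarR).prod mulHaarR) :=
    measurePreserving_prod_mulHaarR_inv_mul measurable_snd
      (Measure.quasiMeasurePreserving_snd.ae (mulHaarR.ae_ne 0))
  have ha₂ : MeasurePreserving (fun p : ℝ × ℝ => (p.1, p.1⁻¹ * p.2))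
      (mulHaarR.prod mulHaarR) (mulHaarR.prod mulHaarR) :=
    measurePreserving_prod_mulHaarR_inv_mul measurable_id (mulHaarR.ae_ne 0)
  exact ((MeasurePreserving.id mulHaarR).prod ha₂).comp
    ((Measure.measurePreserving_swap.comp hc).comp Measure.measurePreserving_swap)

lemma ae_ne_zero_prod_prod : ∀ᵐ p : ℝ × ℝ × ℝ ∂μ₃, p.1 ≠ 0 ∧ p.2.1 ≠ 0 ∧ p.2.2 ≠ 0 := by
  have h₂ : ∀ᵐ p : ℝ × ℝ × ℝ ∂μ₃, p.2 ∈ {q : ℝ × ℝ | q.1 ≠ 0 ∧ q.2 ≠ 0} :=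
    Measure.quasiMeasurePreserving_snd.ae
      ((Measure.quasiMeasurePreserving_fst.ae (mulHaarR.ae_ne 0)).and
        (Measure.quasiMeasurePreserving_snd.ae (mulHaarR.ae_ne 0)))
  filter_upwards [Measure.quasiMeasurePreserving_fst.ae (mulHaarR.ae_ne 0), h₂] with p h₁ h₂
  exact ⟨h₁, h₂⟩

lemma bfIntegrandR2_eq (s₁ s₂ t₁ t₂ : ℂ) {a₁ a₂ c : ℝ} (h₁ : a₁ ≠ 0) (h₂ : a₂ ≠ 0) (hc : c ≠ 0) :
    bfIntegrandR2 s₁ s₂ t₁ t₂ (a₁, a₂, c) = tateGaussian (s₁ + t₁) (c⁻¹ * a₁) *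
      (tateGaussian (s₂ + t₁ + t₂) a₂ * tateGaussian (s₁ + t₂) (a₂⁻¹ * c)) := by
  have l₁ : Real.log |c⁻¹ * a₁| = -Real.log |c| + Real.log |a₁| := by
    rw [abs_mul, abs_inv, Real.log_mul (by positivity) (by positivity), Real.log_inv]
  have l₂ : Real.log |a₂⁻¹ * c| = -Real.log |a₂| + Real.log |c| := by
    rw [abs_mul, abs_inv, Real.log_mul (by positivity) (by positivity), Real.log_inv]
  have hc' : (c : ℂ) ≠ 0 := Complex.ofReal_ne_zero.mpr hc
  have h₂' : (a₂ : ℂ) ≠ 0 := Complex.ofReal_ne_zero.mpr h₂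
  simp only [bfIntegrandR2, tateGaussian, cpowR, l₁, l₂]
  push_cast
  simp only [← Complex.exp_add]
  congr 1
  field_simp
  ring

end BumpFriedberg

/-- For `Re(s₁ + t₁) > 0`, `Re(s₁ + t₂) > 0`, `Re(s₂ + t₁ + t₂) > 0`, the triple integral
`∫∫∫ |a₁|^{s₁+t₁} |a₂|^{s₂-s₁+t₁} |c|^{t₂-t₁} e^{-π a₂² - π c²/a₂² - π a₁²/c²}
  d×c d×a₁ d×a₂` converges absolutely and equals `ζ_ℝ(s₁+t₁) ζ_ℝ(s₁+t₂) ζ_ℝ(s₂+t₁+t₂)`. -/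
theorem stmt_7 (t₁ t₂ s₁ s₂ : ℂ) (h₁ : 0 < (s₁ + t₁).re) (h₂ : 0 < (s₁ + t₂).re)
    (h₃ : 0 < (s₂ + t₁ + t₂).re) :
    Integrable (bfIntegrandR2 s₁ s₂ t₁ t₂) (mulHaarR.prod (mulHaarR.prod mulHaarR)) ∧
      ∫ p : ℝ × ℝ × ℝ, bfIntegrandR2 s₁ s₂ t₁ t₂ p
          ∂(mulHaarR.prod (mulHaarR.prod mulHaarR)) =
        zetaR (s₁ + t₁) * zetaR (s₁ + t₂) * zetaR (s₂ + t₁ + t₂) := by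
  set F : ℝ × ℝ × ℝ → ℂ := fun q => tateGaussian (s₁ + t₁) q.1 *
    (tateGaussian (s₂ + t₁ + t₂) q.2.1 * tateGaussian (s₁ + t₂) q.2.2)
  have hΦ := measurePreserving_bfSubstR2
  have hF : Integrable F (mulHaarR.prod (mulHaarR.prod mulHaarR)) :=
    (integrable_tateGaussian h₁).mul_prod
      ((integrable_tateGaussian h₃).mul_prod (integrable_tateGaussian h₂))
  have hae : bfIntegrandR2 s₁ s₂ t₁ t₂ =ᵐ[mulHaarR.prod (mulHaarR.prod mulHaarR)] F ∘ bfSubstR2 := by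
    filter_upwards [ae_ne_zero_prod_prod] with p ⟨ha₁, ha₂, hc⟩
    exact bfIntegrandR2_eq s₁ s₂ t₁ t₂ ha₁ ha₂ hc
  refine ⟨(hΦ.integrable_comp_of_integrable hF).congr hae.symm, ?_⟩
  rw [integral_congr_ae hae, Function.comp_def,
    hΦ.integral_comp_of_aestronglyMeasurable hF.aestronglyMeasurable]
  simp only [F]
  rw [integral_prod_mul (f := tateGaussian (s₁ + t₁))
      (g := fun r : ℝ × ℝ => tateGaussian (s₂ + t₁ + t₂) r.1 * tateGaussian (s₁ + t₂) r.2),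
    integral_prod_mul, integral_tateGaussian h₁, integral_tateGaussian h₂,
    integral_tateGaussian h₃]
  simp only [zetaR, ← Complex.Gammaℝ_def]
  ring
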